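/- Let n ≥ 2. Let (G(k))_{k≥1} be a sequence of rooted communication graphs on n nodes and Ĝ(ℓ) = G((ℓ−1)(n−1)+1) ∘ ⋯ ∘ G(ℓ(n−1)) the macro-round graphs. Let x : ℕ → ℝ^n be the amortized mean-value execution: x(0) ∈ [0,1]^n and for each ℓ ≥ 1 and each p, x(ℓ)_p is the arithmetic mean of the set V_p(ℓ) = {x(ℓ−1)_q : q ∈ In_p(Ĝ(ℓ))} of distinct received values. Then δ(x(ℓ)) ≤ (1 − 1/n)^ℓ · δ(x(0)) for every ℓ ≥ 0; in particular, for every ε ∈ (0, 1) and every ℓ ≥ n·ln(1/ε), δ(x(ℓ)) ≤ ε. (The amortized mean-value algorithm achieves ε-agreement in O(n² log(1/ε)) rounds in anonymous rooted network models.) -/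
import Mathlib


/-- `δ(x) = max_p x_p − min_p x_p`. -/
noncomputable def delta {n : ℕ} (x : Fin n → ℝ) : ℝ :=
  sSup (Set.range x) - sInf (Set.range x)

/-- A communication graph is rooted if there is a node `r` from which every node is
reachable by a directed path. -/
def Rooted {n : ℕ} (E : Fin n → Fin n → Prop) : Prop :=
  ∃ r, ∀ p, Relation.ReflTransGen E r p

/-- `ProdSeg G a m` is the product `G (a+1) ∘ G (a+2) ∘ ⋯ ∘ G (a+m)`, where the product
`G ∘ H` has an edge `(p,q)` iff there is `r` with `(p,r) ∈ G` and `(r,q) ∈ H`;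
the empty product is the identity graph. -/
def ProdSeg {n : ℕ} (G : ℕ → Fin n → Fin n → Prop) (a : ℕ) : ℕ → Fin n → Fin n → Prop
  | 0 => fun p q => p = q
  | m + 1 => fun p q => ∃ r, ProdSeg G a m p r ∧ G (a + m + 1) r q

/-- The arithmetic mean of a finite set of reals: the sum of its distinct elements
divided by its cardinality. -/
noncomputable def setMean (V : Set ℝ) (hV : V.Finite) : ℝ :=
  (∑ v ∈ hV.toFinset, v) / hV.toFinset.card

/- ### Auxiliary combinatorial lemmas -/

def Bset {n : ℕ} (G : ℕ → Fin n → Fin n → Prop) (a m : ℕ) (S : Set (Fin n)) : Set (Fin n) :=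
  {q | ∃ p ∈ S, ProdSeg G a m q p}

def preim {n : ℕ} (E : Fin n → Fin n → Prop) (S : Set (Fin n)) : Set (Fin n) :=
  {u | ∃ v ∈ S, E u v}

section Comb

variable {n : ℕ} {G : ℕ → Fin n → Fin n → Prop}

lemma ProdSeg_self (hrefl : ∀ k, 1 ≤ k → ∀ p, G k p p) (a : ℕ) (p : Fin n) :
    ∀ m, ProdSeg G a m p p := by
  intro m
  induction m with
  | zero => rfl
  | succ m ih => exact ⟨p, ih, hrefl (a + m + 1) (by omega) p⟩

lemma Bset_zero (a : ℕ) (S : Set (Fin n)) : Bset G a 0 S = S := by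
  ext q; simp [Bset, ProdSeg]

lemma Bset_succ (a m : ℕ) (S : Set (Fin n)) :
    Bset G a (m + 1) S = Bset G a m (preim (G (a + m + 1)) S) := by
  ext q
  simp only [Bset, preim, ProdSeg, Set.mem_setOf_eq]
  constructor
  · rintro ⟨p, hp, r, hqr, hrp⟩; exact ⟨r, ⟨p, hp, hrp⟩, hqr⟩
  · rintro ⟨r, ⟨p, hp, hrp⟩, hqr⟩; exact ⟨p, hp, r, hqr, hrp⟩

lemma subset_preim (hrefl : ∀ k, 1 ≤ k → ∀ p, G k p p) (k : ℕ) (hk : 1 ≤ k)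
    (S : Set (Fin n)) : S ⊆ preim (G k) S :=
  fun u hu => ⟨u, hu, hrefl k hk u⟩

lemma subset_Bset (hrefl : ∀ k, 1 ≤ k → ∀ p, G k p p) (a m : ℕ) (S : Set (Fin n)) :
    S ⊆ Bset G a m S :=
  fun p hp => ⟨p, hp, ProdSeg_self hrefl a p m⟩

lemma root_mem {E : Fin n → Fin n → Prop} {r : Fin n} (hr : ∀ p, Relation.ReflTransGen E r p)
    {S : Set (Fin n)} (hS : S.Nonempty) (hcl : preim E S ⊆ S) : r ∈ S := by
  obtain ⟨s, hs⟩ := hS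
  refine Relation.ReflTransGen.head_induction_on (hr s) hs ?_
  intro a c hac _ hc
  exact hcl ⟨c, hc, hac⟩

lemma key_count (hrefl : ∀ k, 1 ≤ k → ∀ p, G k p p)
    (hrooted : ∀ k, 1 ≤ k → Rooted (G k)) :
    ∀ m a (S T : Set (Fin n)), S.Nonempty → T.Nonempty →
      Disjoint (Bset G a m S) (Bset G a m T) →
      S.ncard + T.ncard + m ≤ (Bset G a m S ∪ Bset G a m T).ncard := by
  intro m
  induction m with
  | zero =>
    intro a S T _ _ hd
    rw [Bset_zero a S, Bset_zero a T] at hd ⊢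
    simp [Set.ncard_union_eq hd]
  | succ m ih =>
    intro a S T hS hT hd
    set k := a + m + 1 with hk
    set S' := preim (G k) S with hS'def
    set T' := preim (G k) T with hT'def
    rw [Bset_succ a m S, Bset_succ a m T, ← hS'def, ← hT'def] at hd ⊢
    have hSS' : S ⊆ S' := subset_preim hrefl k (by omega) S
    have hTT' : T ⊆ T' := subset_preim hrefl k (by omega) T
    have hS' : S'.Nonempty := hS.mono hSS'
    have hT' : T'.Nonempty := hT.mono hTT'
    have hdisjST : Disjoint S' T' :=
      hd.mono (subset_Bset hrefl a m S') (subset_Bset hrefl a m T')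
    have hmain := ih a S' T' hS' hT' hd
    by_cases hcase : S' = S ∧ T' = T
    · exfalso
      obtain ⟨r, hr⟩ := hrooted k (by omega)
      have hrS : r ∈ S := root_mem hr hS hcase.1.subset
      have hrT : r ∈ T := root_mem hr hT hcase.2.subset
      exact (Set.disjoint_left.1 hdisjST (hSS' hrS)) (hTT' hrT)
    · have hlt : S.ncard + T.ncard + 1 ≤ S'.ncard + T'.ncard := by
        rcases not_and_or.1 hcase with h | h
        · have h1 : S.ncard < S'.ncard :=
            Set.ncard_lt_ncard (ssubset_of_subset_of_ne hSS' (Ne.symm h)) (Set.toFinite _)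
          have h2 : T.ncard ≤ T'.ncard := Set.ncard_le_ncard hTT' (Set.toFinite _)
          omega
        · have h1 : T.ncard < T'.ncard :=
            Set.ncard_lt_ncard (ssubset_of_subset_of_ne hTT' (Ne.symm h)) (Set.toFinite _)
          have h2 : S.ncard ≤ S'.ncard := Set.ncard_le_ncard hSS' (Set.toFinite _)
          omega
      omega

lemma nonsplit (hn : 2 ≤ n) (hrefl : ∀ k, 1 ≤ k → ∀ p, G k p p)
    (hrooted : ∀ k, 1 ≤ k → Rooted (G k)) (a : ℕ) (p q : Fin n) :
    ∃ r, ProdSeg G a (n - 1) r p ∧ ProdSeg G a (n - 1) r q := by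
  by_contra h
  push_neg at h
  have hd : Disjoint (Bset G a (n - 1) {p}) (Bset G a (n - 1) {q}) := by
    rw [Set.disjoint_left]
    rintro r ⟨p', hp', hrp⟩ ⟨q', hq', hrq⟩
    rw [Set.mem_singleton_iff] at hp' hq'
    subst hp'; subst hq'
    exact h r hrp hrq
  have := key_count hrefl hrooted (n - 1) a {p} {q} ⟨p, rfl⟩ ⟨q, rfl⟩ hd
  simp only [Set.ncard_singleton] at this
  have hle : (Bset G a (n - 1) {p} ∪ Bset G a (n - 1) {q}).ncard ≤ n := by
    have := Set.ncard_le_ncard (Set.subset_univ (Bset G a (n - 1) {p} ∪ Bset G a (n - 1) {q}))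
      (Set.toFinite _)
    simpa [Set.ncard_univ] using this
  omega

end Comb

/- ### Auxiliary analytic lemmas -/

lemma setMean_le {V : Set ℝ} (hV : V.Finite) {M v0 : ℝ} (hv0 : v0 ∈ V)
    (hM : ∀ v ∈ V, v ≤ M) {n : ℕ} (hn : 0 < n) (hcard : hV.toFinset.card ≤ n) :
    setMean V hV ≤ M - (M - v0) / n := by
  classical
  set F := hV.toFinset with hF
  have hv0F : v0 ∈ F := hV.mem_toFinset.2 hv0
  have hcpos : 0 < F.card := Finset.card_pos.2 ⟨v0, hv0F⟩
  have hv0M : v0 ≤ M := hM v0 hv0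
  have hsum : ∑ v ∈ F, v ≤ v0 + (F.card - 1 : ℕ) * M := by
    rw [← Finset.add_sum_erase F _ hv0F]
    have : ∑ v ∈ F.erase v0, v ≤ (F.erase v0).card • M :=
      Finset.sum_le_card_nsmul _ _ M (fun v hv => hM v (hV.mem_toFinset.1 (Finset.mem_of_mem_erase hv)))
    rw [Finset.card_erase_of_mem hv0F] at this
    simpa [nsmul_eq_mul] using add_le_add_left this v0
  have hc : (1 : ℝ) ≤ (F.card : ℝ) := by exact_mod_cast hcpos
  have hcR : (0 : ℝ) < (F.card : ℝ) := by positivity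
  have h1 : setMean V hV ≤ (v0 + (F.card - 1 : ℕ) * M) / F.card := by
    unfold setMean
    gcongr
  have h2 : (v0 + (F.card - 1 : ℕ) * M) / F.card = M - (M - v0) / F.card := by
    have : ((F.card - 1 : ℕ) : ℝ) = (F.card : ℝ) - 1 := by
      have := hcpos; push_cast [Nat.cast_sub (by omega : 1 ≤ F.card)]; ring
    rw [this]
    field_simp
    ring
  have h3 : M - (M - v0) / F.card ≤ M - (M - v0) / n := by
    have : (M - v0) / n ≤ (M - v0) / F.card := by
      gcongr
    linarith
  calc setMean V hV ≤ (v0 + (F.card - 1 : ℕ) * M) / F.card := h1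
    _ = M - (M - v0) / F.card := h2
    _ ≤ M - (M - v0) / n := h3

lemma setMean_ge {V : Set ℝ} (hV : V.Finite) {m v0 : ℝ} (hv0 : v0 ∈ V)
    (hm : ∀ v ∈ V, m ≤ v) {n : ℕ} (hn : 0 < n) (hcard : hV.toFinset.card ≤ n) :
    m + (v0 - m) / n ≤ setMean V hV := by
  classical
  have hVneg : (Neg.neg '' V).Finite := hV.image _
  have hkey := setMean_le hVneg (M := -m) (v0 := -v0) ⟨v0, hv0, rfl⟩
    (by rintro v ⟨w, hw, rfl⟩; simpa using hm w hw) hn ?hc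
  case hc =>
    have : hVneg.toFinset = hV.toFinset.image Neg.neg := by
      ext v
      simp only [Set.Finite.mem_toFinset, Finset.mem_image, Set.mem_image]
    rw [this]
    exact (Finset.card_image_le).trans hcard
  have hmean : setMean (Neg.neg '' V) hVneg = - setMean V hV := by
    unfold setMean
    have hto : hVneg.toFinset = hV.toFinset.image Neg.neg := by
      ext v
      simp only [Set.Finite.mem_toFinset, Finset.mem_image, Set.mem_image]
    rw [hto, Finset.sum_image (by intro a _ b _ h; linarith), Finset.card_image_of_injective _
      (fun a b h => by linarith [h] : Function.Injective (Neg.neg : ℝ → ℝ))]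
    rw [Finset.sum_neg_distrib]
    ring
  rw [hmean] at hkey
  have : -setMean V hV ≤ -m - (-m - -v0) / n := hkey
  have h2 : (-m - -v0) = (v0 - m) := by ring
  rw [h2] at this
  linarith

theorem amortized_mean_value
    (n : ℕ) (hn : 2 ≤ n)
    (G : ℕ → Fin n → Fin n → Prop)
    (hrefl : ∀ k, 1 ≤ k → ∀ p, G k p p)
    (hrooted : ∀ k, 1 ≤ k → Rooted (G k))
    (x : ℕ → Fin n → ℝ)
    (hx0 : ∀ p, x 0 p ∈ Set.Icc (0 : ℝ) 1)
    -- at each macro-round `l ≥ 1`, each process `p` adopts the arithmetic mean of the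
    -- set of distinct values received along the macro-round graph
    -- `Ĝ(l) = G((l−1)(n−1)+1) ∘ ⋯ ∘ G(l(n−1))`
    (hupd : ∀ l, 1 ≤ l → ∀ p,
      x l p = setMean (x (l - 1) '' {q | ProdSeg G ((l - 1) * (n - 1)) (n - 1) q p})
        (Set.toFinite _)) :
    (∀ l : ℕ, delta (x l) ≤ (1 - 1 / (n : ℝ)) ^ l * delta (x 0)) ∧
    ∀ ε : ℝ, 0 < ε → ε < 1 →
      ∀ l : ℕ, (n : ℝ) * Real.log (1 / ε) ≤ (l : ℝ) → delta (x l) ≤ ε := by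
  have hnpos : 0 < n := by omega
  have hnR : (0 : ℝ) < n := by exact_mod_cast hnpos
  have hfac0 : (0 : ℝ) ≤ 1 - 1 / n := by
    have : (1 : ℝ) / n ≤ 1 := by
      rw [div_le_one hnR]; exact_mod_cast (by omega : 1 ≤ n)
    linarith
  have hne : Nonempty (Fin n) := ⟨⟨0, by omega⟩⟩
  have hrange : ∀ l, (Set.range (x l)).Finite := fun l => Set.finite_range _
  have hrangene : ∀ l, (Set.range (x l)).Nonempty := fun l => Set.range_nonempty _
  have hle_sup : ∀ l p, x l p ≤ sSup (Set.range (x l)) := fun l p =>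
    le_csSup (hrange l).bddAbove ⟨p, rfl⟩
  have hinf_le : ∀ l p, sInf (Set.range (x l)) ≤ x l p := fun l p =>
    csInf_le (hrange l).bddBelow ⟨p, rfl⟩
  have hdelta_nonneg : ∀ l, 0 ≤ delta (x l) := by
    intro l
    obtain ⟨p⟩ := hne
    have h1 := hle_sup l p; have h2 := hinf_le l p
    unfold delta; linarith
  -- cardinality bound for the sets of values
  have hcard : ∀ l (B : Set (Fin n)), (Set.toFinite (x l '' B)).toFinset.card ≤ n := by
    intro l B
    classical
    have hsub : (Set.toFinite (x l '' B)).toFinset ⊆ Finset.univ.image (x l) := by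
      intro v hv
      rw [Set.Finite.mem_toFinset] at hv
      obtain ⟨q, _, rfl⟩ := hv
      exact Finset.mem_image.2 ⟨q, Finset.mem_univ q, rfl⟩
    calc (Set.toFinite (x l '' B)).toFinset.card ≤ (Finset.univ.image (x l)).card :=
          Finset.card_le_card hsub
      _ ≤ Finset.univ.card := Finset.card_image_le
      _ = n := by simp
  -- one-step contraction
  have contract : ∀ l, delta (x (l + 1)) ≤ (1 - 1 / (n : ℝ)) * delta (x l) := by
    intro l
    set M := sSup (Set.range (x l)) with hM
    set m' := sInf (Set.range (x l)) with hm'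
    have key : ∀ p q, x (l + 1) p - x (l + 1) q ≤ (1 - 1 / (n : ℝ)) * (M - m') := by
      intro p q
      obtain ⟨r, hrp, hrq⟩ := nonsplit hn hrefl hrooted (l * (n - 1)) p q
      have hp := hupd (l + 1) (by omega) p
      have hq := hupd (l + 1) (by omega) q
      simp only [Nat.add_sub_cancel] at hp hq
      have hub : x (l + 1) p ≤ M - (M - x l r) / n := by
        rw [hp]
        refine setMean_le (V := x l '' {q | ProdSeg G (l * (n - 1)) (n - 1) q p}) (v0 := x l r) (Set.toFinite _) ⟨r, hrp, rfl⟩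
          (by rintro v ⟨q', _, rfl⟩; exact hle_sup l q') hnpos (hcard l _)
      have hlb : m' + (x l r - m') / n ≤ x (l + 1) q := by
        rw [hq]
        refine setMean_ge (V := x l '' {q' | ProdSeg G (l * (n - 1)) (n - 1) q' q}) (v0 := x l r) (Set.toFinite _) ⟨r, hrq, rfl⟩
          (by rintro v ⟨q', _, rfl⟩; exact hinf_le l q') hnpos (hcard l _)
      have hring : (M - x l r) / (n : ℝ) + (x l r - m') / n = (M - m') / n := by ring
      have hring2 : (1 - 1 / (n : ℝ)) * (M - m') = (M - m') - (M - m') / n := by ring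
      linarith
    obtain ⟨p, hp⟩ := (hrangene (l + 1)).csSup_mem (hrange (l + 1))
    obtain ⟨q, hq⟩ := (hrangene (l + 1)).csInf_mem (hrange (l + 1))
    have : delta (x (l + 1)) = x (l + 1) p - x (l + 1) q := by
      unfold delta; rw [hp, hq]
    rw [this]
    have hdl : delta (x l) = M - m' := rfl
    rw [hdl]
    exact key p q
  have part1 : ∀ l : ℕ, delta (x l) ≤ (1 - 1 / (n : ℝ)) ^ l * delta (x 0) := by
    intro l
    induction l with
    | zero => simp
    | succ l ih =>
      calc delta (x (l + 1)) ≤ (1 - 1 / (n : ℝ)) * delta (x l) := contract l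
        _ ≤ (1 - 1 / (n : ℝ)) * ((1 - 1 / (n : ℝ)) ^ l * delta (x 0)) :=
            mul_le_mul_of_nonneg_left ih hfac0
        _ = (1 - 1 / (n : ℝ)) ^ (l + 1) * delta (x 0) := by ring
  refine ⟨part1, ?_⟩
  intro ε hε hε1 l hl
  have hδ0 : delta (x 0) ≤ 1 := by
    have h1 : sSup (Set.range (x 0)) ≤ 1 :=
      csSup_le (hrangene 0) (by rintro v ⟨p, rfl⟩; exact (hx0 p).2)
    have h2 : (0 : ℝ) ≤ sInf (Set.range (x 0)) :=
      le_csInf (hrangene 0) (by rintro v ⟨p, rfl⟩; exact (hx0 p).1)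
    unfold delta; linarith
  have hpow : (1 - 1 / (n : ℝ)) ^ l ≤ ε := by
    have hexp1 : (1 - 1 / (n : ℝ)) ≤ Real.exp (-(1 / n)) := by
      have := Real.add_one_le_exp (-(1 / (n : ℝ)))
      linarith
    have hpow1 : (1 - 1 / (n : ℝ)) ^ l ≤ Real.exp (-(1 / n)) ^ l :=
      pow_le_pow_left₀ hfac0 hexp1 l
    have hexp2 : Real.exp (-(1 / (n : ℝ))) ^ l = Real.exp (-(l / n)) := by
      rw [← Real.exp_nat_mul]
      congr 1
      ring
    have hexp3 : Real.exp (-((l : ℝ) / n)) ≤ Real.exp (-Real.log (1 / ε)) := by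
      apply Real.exp_le_exp.2
      have : Real.log (1 / ε) ≤ (l : ℝ) / n := by
        rw [le_div_iff₀ hnR]
        calc Real.log (1 / ε) * n = n * Real.log (1 / ε) := by ring
          _ ≤ l := hl
      linarith
    have hexp4 : Real.exp (-Real.log (1 / ε)) = ε := by
      rw [Real.exp_neg, Real.exp_log (by positivity)]
      simp
    calc (1 - 1 / (n : ℝ)) ^ l ≤ Real.exp (-(1 / n)) ^ l := hpow1
      _ = Real.exp (-(l / n)) := hexp2
      _ ≤ Real.exp (-Real.log (1 / ε)) := hexp3
      _ = ε := hexp4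
  calc delta (x l) ≤ (1 - 1 / (n : ℝ)) ^ l * delta (x 0) := part1 l
    _ ≤ (1 - 1 / (n : ℝ)) ^ l * 1 := mul_le_mul_of_nonneg_left hδ0 (pow_nonneg hfac0 l)
    _ = (1 - 1 / (n : ℝ)) ^ l := mul_one _
    _ ≤ ε := hpow
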